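/- Let u be a smooth solution of the penalized problem (∗_δ) on 𝕊^n × [0,T) with initial data u₀ strictly enclosing the shrinking obstacle. Then u(z,t) > φ(z,t) for all (z,t) ∈ 𝕊^n × [0,T), and −C₀ ≤ β_δ(u(z,t) − φ(z,t)) ≤ 0 for all (z,t) ∈ 𝕊^n × [0,T), where C₀ = ‖K_Φ‖_{L^∞(𝕊^n×[0,∞))}^α is independent of δ. -/

import Mathlib

/-!
STATEMENT 5: Let `u` be a smooth solution of the penalized problem `(∗_δ)` on `𝕊ⁿ × [0,T)`
with initial data `u₀` strictly enclosing the shrinking obstacle.  Then `u(z,t) > φ(z,t)`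
for all `(z,t) ∈ 𝕊ⁿ × [0,T)`, and `−C₀ ≤ β_δ(u(z,t) − φ(z,t)) ≤ 0` for all
`(z,t) ∈ 𝕊ⁿ × [0,T)`, where `C₀ = ‖K_Φ‖_{L^∞(𝕊ⁿ×[0,∞))}^α` is independent of `δ`.
-/

open scoped BigOperators RealInnerProductSpace
noncomputable section

abbrev ES (n : ℕ) := EuclideanSpace ℝ (Fin (n + 1))

/-- The unit sphere `𝕊^n ⊂ ℝ^{n+1}`. -/
def Sph (n : ℕ) : Set (ES n) := Metric.sphere 0 1

/-- Second derivative of `f` at `z` in the directions `v, w`. -/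
def hbil {F : Type*} [NormedAddCommGroup F] [NormedSpace ℝ F] (f : F → ℝ) (z v w : F) : ℝ :=
  fderiv ℝ (fun x => fderiv ℝ f x w) z v

/-- For the 1-homogeneous extension `U` of the support function of a convex body and a unit
vector `z`, `suppHessDet n U z = det(D²U(z) + z⊗z)` equals
`det(∇̄_i∇̄_j u + u ḡ_{ij})/det(ḡ_{ij})`, the product of the principal radii of curvature;
the Gauss curvature at the point with outer normal `z` is its inverse,
`K = det ḡ/det(∇̄²u + uḡ) = (suppHessDet n U z)⁻¹`. -/
def suppHessDet (n : ℕ) (U : ES n → ℝ) (z : ES n) : ℝ :=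
  (Matrix.of fun i j : Fin (n + 1) =>
      hbil U z (EuclideanSpace.single i 1) (EuclideanSpace.single j 1) +
        ⟪z, EuclideanSpace.single i 1⟫ * ⟪z, EuclideanSpace.single j 1⟫).det

/-- `u₀` is the (1-homogeneously extended) support function of a closed strictly convex
smooth hypersurface. -/
def IsSupportOfSmoothBody (n : ℕ) (u₀ : ES n → ℝ) : Prop :=
  (∀ c : ℝ, 0 < c → ∀ x, u₀ (c • x) = c * u₀ x) ∧
    ContDiffOn ℝ (⊤ : ℕ∞) u₀ {(0 : ES n)}ᶜ ∧
    ∀ z ∈ Sph n, ∀ v : ES n, ⟪v, z⟫ = 0 → v ≠ 0 → 0 < hbil u₀ z v v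

/-- A shrinking obstacle `Φ_t = ∂Ω(t)`: a decreasing family of strictly convex bodies
(whose limit contains the origin as interior point), with support functions
`φ ∈ C^{3,1}(𝕊ⁿ×[0,∞))` (extended 1-homogeneously), `∂_tφ < 0`, `−∂_tφ` non-increasing,
and principal curvatures `μ_i` positive, non-decreasing in `t` and bounded. -/
structure ShrinkingObstacle (n : ℕ) : Type where
  φ : ES n → ℝ → ℝ
  homog : ∀ t : ℝ, 0 ≤ t → ∀ c : ℝ, 0 < c → ∀ x, φ (c • x) t = c * φ x t
  smooth : ContDiffOn ℝ 3 (fun p : ES n × ℝ => φ p.1 p.2) ({(0 : ES n)}ᶜ ×ˢ Set.Ici 0)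
  φt : ES n → ℝ → ℝ
  hφt : ∀ z ∈ Sph n, ∀ t : ℝ, 0 ≤ t → HasDerivAt (φ z) (φt z t) t
  φt_neg : ∀ z ∈ Sph n, ∀ t : ℝ, 0 ≤ t → φt z t < 0
  speed_nonincreasing : ∀ z ∈ Sph n, ∀ s t : ℝ, 0 ≤ s → s ≤ t → φt z s ≤ φt z t
  μ : Fin n → ES n → ℝ → ℝ
  μ_pos : ∀ i, ∀ z ∈ Sph n, ∀ t : ℝ, 0 ≤ t → 0 < μ i z t
  μ_eigen : ∀ z ∈ Sph n, ∀ t : ℝ, 0 ≤ t → ∃ e : Fin n → ES n, Orthonormal ℝ e ∧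
    (∀ i, ⟪e i, z⟫ = 0) ∧
    ∀ i (v : ES n), hbil (fun x => φ x t) z (e i) v = (μ i z t)⁻¹ * ⟪e i, v⟫
  μ_mono : ∀ i, ∀ z ∈ Sph n, ∀ s t : ℝ, 0 ≤ s → s ≤ t → μ i z s ≤ μ i z t
  μ_bdd : ∃ M : ℝ, ∀ i, ∀ z ∈ Sph n, ∀ t : ℝ, 0 ≤ t → μ i z t ≤ M
  interior_point : ∃ ρ : ℝ, 0 < ρ ∧ ∀ z ∈ Sph n, ∀ t : ℝ, 0 ≤ t → ρ ≤ φ z t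

/-- The penalty function `β_δ(x) = C₀β(x/δ)`: smooth, non-decreasing, concave, vanishing on
`[δ,∞)`, affine on `(−∞,0)`, with `β_δ(0) = −C₀`. -/
structure Penalty (δ C₀ : ℝ) : Type where
  β : ℝ → ℝ
  smooth : ContDiff ℝ (⊤ : ℕ∞) β
  mono : Monotone β
  concave : ConcaveOn ℝ Set.univ β
  zero_of_ge : ∀ x : ℝ, δ ≤ x → β x = 0
  affine_on_neg : ∀ x : ℝ, x < 0 → deriv (deriv β) x = 0
  at_zero : β 0 = -C₀

/-- `C₀ = ‖K_Φ‖_{L^∞(𝕊ⁿ×[0,∞))}^α`, where `K_Φ = μ₁⋯μ_n` is the Gauss curvature of the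
obstacle. -/
def PenaltyConst (n : ℕ) (α : ℝ) (Φ : ShrinkingObstacle n) (C₀ : ℝ) : Prop :=
  C₀ = sSup {y : ℝ | ∃ z ∈ Sph n, ∃ t : ℝ, 0 ≤ t ∧ y = (∏ i, Φ.μ i z t) ^ α}

/-- A smooth solution of the penalized problem `(∗_δ)` on `[0,T)`:
`−∂_t u = K^α + β_δ(u − φ)`, where `u(·,t)` is the (1-homogeneously extended) support
function of a closed strictly convex smooth hypersurface `Σ_t` and
`K = (suppHessDet)⁻¹` is its Gauss curvature. -/
structure IsPenalizedSol (n : ℕ) (α T δ C₀ : ℝ) (Φ : ShrinkingObstacle n)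
    (P : Penalty δ C₀) (u : ES n → ℝ → ℝ) : Prop where
  homog : ∀ t ∈ Set.Ico (0 : ℝ) T, ∀ c : ℝ, 0 < c → ∀ x, u (c • x) t = c * u x t
  smooth : ContDiffOn ℝ (⊤ : ℕ∞) (fun p : ES n × ℝ => u p.1 p.2) ({(0 : ES n)}ᶜ ×ˢ Set.Ico 0 T)
  strict_convex : ∀ t ∈ Set.Ico (0 : ℝ) T, ∀ z ∈ Sph n, ∀ v : ES n,
    ⟪v, z⟫ = 0 → v ≠ 0 → 0 < hbil (fun x => u x t) z v v
  eqn : ∀ z ∈ Sph n, ∀ t ∈ Set.Ioo (0 : ℝ) T,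
    HasDerivAt (u z)
      (-((suppHessDet n (fun x => u x t) z) ^ (-α)) - P.β (u z t - Φ.φ z t)) t

/-- The initial hypersurface (with support function `u₀`) strictly encloses the obstacle,
together with the standing normalization `−∂_tφ(·,0) < min_{𝕊ⁿ} K₀^α` and
`−∂_tφ(·,0) < min_{𝕊ⁿ} K_{Φ₀}^α`. -/
def Encloses (n : ℕ) (α : ℝ) (u₀ : ES n → ℝ) (Φ : ShrinkingObstacle n) : Prop :=
  (∀ z ∈ Sph n, Φ.φ z 0 < u₀ z) ∧
    (∀ z ∈ Sph n, ∀ z' ∈ Sph n, -Φ.φt z 0 < ((suppHessDet n u₀ z')⁻¹) ^ α) ∧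
    (∀ z ∈ Sph n, ∀ z' ∈ Sph n, -Φ.φt z 0 < (∏ i, Φ.μ i z' 0) ^ α)


open scoped Topology

section MatrixAux
open Matrix
lemma det_one_add_psd {m : Type*} [Fintype m] [DecidableEq m] {C : Matrix m m ℝ}
    (hC : C.PosSemidef) : 1 ≤ (1 + C).det := by
  have hH := hC.1
  have hst := hH.spectral_theorem
  set V : Matrix m m ℝ := (hH.eigenvectorUnitary : Matrix m m ℝ) with hV
  set D : Matrix m m ℝ := Matrix.diagonal (RCLike.ofReal ∘ hH.eigenvalues) with hD
  have hVV : V * star V = 1 := (Matrix.mem_unitaryGroup_iff).mp hH.eigenvectorUnitary.2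
  have h1 : (1 : Matrix m m ℝ) + C = V * (1 + D) * star V := by
    rw [Matrix.mul_add, Matrix.add_mul, Matrix.mul_one, hVV, hst, Unitary.conjStarAlgAut_apply]
  have hdet : V.det * (star V).det = 1 := by
    rw [← Matrix.det_mul, hVV, Matrix.det_one]
  have h2 : (1 + C).det = (1 + D).det := by
    rw [h1, Matrix.det_mul, Matrix.det_mul]; linear_combination (1 + D).det * hdet
  have h3 : (1 : Matrix m m ℝ) + D = Matrix.diagonal (fun i => 1 + hH.eigenvalues i) := by
    rw [hD, ← Matrix.diagonal_one, Matrix.diagonal_add]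
    congr 1
  rw [h2, h3, Matrix.det_diagonal]
  calc (1:ℝ) = ∏ _i : m, 1 := by simp
  _ ≤ ∏ i : m, (1 + hH.eigenvalues i) := by
      apply Finset.prod_le_prod (fun i _ => zero_le_one) (fun i _ => by linarith [hC.eigenvalues_nonneg i])

open scoped MatrixOrder in
lemma PosDef.det_le_det_add {m : Type*} [Fintype m] [DecidableEq m] {A B : Matrix m m ℝ}
    (hA : A.PosDef) (hB : B.PosSemidef) : A.det ≤ (A + B).det := by
  have hAinv : A⁻¹.PosDef := hA.inv
  set S : Matrix m m ℝ := CFC.sqrt A⁻¹ with hS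
  have hSpsd : S.PosSemidef := (CFC.sqrt_nonneg _).posSemidef
  have hSS : S * S = A⁻¹ := CFC.sqrt_mul_sqrt_self _ hAinv.posSemidef.nonneg
  have hdetA : 0 < A.det := hA.det_pos
  have hdetS : S.det * S.det = A.det⁻¹ := by
    rw [← Matrix.det_mul, hSS, Matrix.det_nonsing_inv, Ring.inverse_eq_inv]
  have hdetSne : S.det ≠ 0 := by
    intro h; rw [h, mul_zero] at hdetS
    exact (inv_pos.mpr hdetA).ne (hdetS)
  have hAdetne : A.det ≠ 0 := ne_of_gt hdetA
  have hAeq : A = S⁻¹ * S⁻¹ := by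
    rw [← Matrix.mul_inv_rev, hSS, Matrix.nonsing_inv_nonsing_inv _ hAdetne.isUnit]
  have hSAS : S * A * S = 1 := by
    rw [hAeq, ← Matrix.mul_assoc, Matrix.mul_assoc (S * S⁻¹), Matrix.mul_nonsing_inv _ hdetSne.isUnit,
      Matrix.nonsing_inv_mul _ hdetSne.isUnit, Matrix.mul_one]
  have hconj : S * (A + B) * S = 1 + S * B * S := by
    rw [Matrix.mul_add, Matrix.add_mul, hSAS]
  have hSBS : (S * B * S).PosSemidef := by
    have := hB.mul_mul_conjTranspose_same S
    rwa [hSpsd.1.eq] at this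
  have hge : 1 ≤ (S * (A + B) * S).det := by rw [hconj]; exact det_one_add_psd hSBS
  rw [Matrix.det_mul, Matrix.det_mul] at hge
  calc A.det = A.det * 1 := (mul_one _).symm
  _ ≤ A.det * (S.det * (A + B).det * S.det) := by
      apply mul_le_mul_of_nonneg_left hge (le_of_lt hdetA)
  _ = (A.det * A.det⁻¹) * (A + B).det := by rw [← hdetS]; ring
  _ = (A + B).det := by rw [mul_inv_cancel₀ hAdetne, one_mul]

end MatrixAux

section CalcAux

variable {E : Type*} [NormedAddCommGroup E] [NormedSpace ℝ E]

variable {E : Type*} [NormedAddCommGroup E] [NormedSpace ℝ E]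


lemma hbil_eq {f : E → ℝ} {z : E} (hf : ContDiffAt ℝ 2 f z) (v w : E) :
    hbil f z v w = (fderiv ℝ (fderiv ℝ f) z v) w := by
  have hd : DifferentiableAt ℝ (fderiv ℝ f) z :=
    (hf.fderiv_right (m := 1) (by norm_num)).differentiableAt one_ne_zero
  have := fderiv_clm_apply hd (differentiableAt_const w)
  rw [hbil, this]
  simp

lemma hbil_symm {f : E → ℝ} {z : E} (hf : ContDiffAt ℝ 2 f z) (v w : E) :
    hbil f z v w = hbil f z w v := by
  rw [hbil_eq hf, hbil_eq hf]
  exact (hf.isSymmSndFDerivAt (by norm_num)).eq v w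

lemma hbil_sum_left (f : E → ℝ) (z w : E) {ι : Type*} (s : Finset ι) (c : ι → ℝ) (v : ι → E) :
    hbil f z (∑ i ∈ s, c i • v i) w = ∑ i ∈ s, c i * hbil f z (v i) w := by
  simp only [hbil, map_sum, map_smul, smul_eq_mul]

lemma hbil_add {f g : E → ℝ} {z : E} (hf : ContDiffAt ℝ 2 f z) (hg : ContDiffAt ℝ 2 g z)
    (v w : E) :
    hbil (fun x => f x + g x) z v w = hbil f z v w + hbil g z v w := by
  obtain ⟨sf, hsf, hsf'⟩ := hf.contDiffOn (m := 2) le_rfl (by simp)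
  obtain ⟨sg, hsg, hsg'⟩ := hg.contDiffOn (m := 2) le_rfl (by simp)
  have hef : ∀ᶠ x in 𝓝 z, DifferentiableAt ℝ f x :=
    ((hsf'.differentiableOn (by norm_num)).eventually_differentiableAt hsf)
  have heg : ∀ᶠ x in 𝓝 z, DifferentiableAt ℝ g x :=
    ((hsg'.differentiableOn (by norm_num)).eventually_differentiableAt hsg)
  have hdf : DifferentiableAt ℝ (fun x => fderiv ℝ f x w) z :=
    ((hf.fderiv_right (m := 1) (by norm_num)).differentiableAt one_ne_zero).clm_apply
      (differentiableAt_const w)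
  have hdg : DifferentiableAt ℝ (fun x => fderiv ℝ g x w) z :=
    ((hg.fderiv_right (m := 1) (by norm_num)).differentiableAt one_ne_zero).clm_apply
      (differentiableAt_const w)
  have hev : (fun x => fderiv ℝ (fun y => f y + g y) x w)
      =ᶠ[𝓝 z] fun x => fderiv ℝ f x w + fderiv ℝ g x w := by
    filter_upwards [hef, heg] with x hfx hgx
    rw [fderiv_fun_add hfx hgx]; rfl
  rw [hbil, hev.fderiv_eq, fderiv_fun_add hdf hdg]
  rfl

lemma hbil_bilin {f : E → ℝ} {z : E} (hf : ContDiffAt ℝ 2 f z) {ι : Type*} (s : Finset ι)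
    (x y : ι → ℝ) (v : ι → E) :
    hbil f z (∑ i ∈ s, x i • v i) (∑ j ∈ s, y j • v j)
      = ∑ i ∈ s, ∑ j ∈ s, x i * y j * hbil f z (v i) (v j) := by
  rw [hbil_sum_left]
  refine Finset.sum_congr rfl fun i _ => ?_
  rw [hbil_symm hf, hbil_sum_left, Finset.mul_sum]
  refine Finset.sum_congr rfl fun j _ => ?_
  rw [hbil_symm hf]; ring

lemma hbil_zero_left (f : E → ℝ) (z w : E) : hbil f z 0 w = 0 := by
  simp [hbil]

lemma second_order_test {f : E → ℝ} {s : Set E} (hs : IsOpen s) {a : E} (ha : a ∈ s)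
    (hf : ∀ x ∈ s, ContDiffAt ℝ 2 f x) (hmin : IsMinOn f s a) (v : E) :
    0 ≤ hbil f a v v := by
  by_contra hQ
  push_neg at hQ
  rcases eq_or_ne v 0 with rfl | hv
  · rw [hbil_zero_left] at hQ; exact absurd hQ (by norm_num)
  obtain ⟨r, hr, hball⟩ := Metric.isOpen_iff.mp hs a ha
  set r' : ℝ := r / ‖v‖ with hr'
  have hvpos : 0 < ‖v‖ := norm_pos_iff.mpr hv
  have hr'pos : 0 < r' := div_pos hr hvpos
  have hmem : ∀ t : ℝ, |t| < r' → a + t • v ∈ s := by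
    intro t ht
    apply hball
    rw [Metric.mem_ball, dist_eq_norm]
    have : a + t • v - a = t • v := by abel
    rw [this, norm_smul, Real.norm_eq_abs]
    calc |t| * ‖v‖ < r' * ‖v‖ := by exact mul_lt_mul_of_pos_right ht hvpos
    _ = r := by rw [hr', div_mul_cancel₀ r hvpos.ne']
  set ψ : E → ℝ := fun x => fderiv ℝ f x v with hψ
  -- the derivative of t ↦ ψ (a + t • v)
  have hcurve : ∀ t : ℝ, HasDerivAt (fun t : ℝ => a + t • v) v t := by
    intro t
    simpa using ((hasDerivAt_id t).smul_const v).const_add a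
  have hψd : ∀ t : ℝ, |t| < r' → HasDerivAt (fun t : ℝ => ψ (a + t • v))
      (fderiv ℝ ψ (a + t • v) v) t := by
    intro t ht
    have hx := hmem t ht
    have hdψ : DifferentiableAt ℝ ψ (a + t • v) :=
      (((hf _ hx).fderiv_right (m := 1) (by norm_num)).differentiableAt one_ne_zero).clm_apply
        (differentiableAt_const v)
    exact hdψ.hasFDerivAt.comp_hasDerivAt t (hcurve t)
  have hgd : ∀ t : ℝ, |t| < r' → HasDerivAt (fun t : ℝ => f (a + t • v)) (ψ (a + t • v)) t := by
    intro t ht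
    have hx := hmem t ht
    have hdf : DifferentiableAt ℝ f (a + t • v) := (hf _ hx).differentiableAt (by norm_num)
    have := hdf.hasFDerivAt.comp_hasDerivAt t (hcurve t)
    exact this
  have hlocal : IsLocalMin f a := hmin.isLocalMin (hs.mem_nhds ha)
  have hψa : ψ a = 0 := by simp only [hψ, hlocal.fderiv_eq_zero]; simp
  have h0 : HasDerivAt (fun t : ℝ => ψ (a + t • v)) (hbil f a v v) 0 := by
    have := hψd 0 (by simpa using hr'pos)
    simpa [hbil] using this
  -- slope of h tends to hbil f a v v < 0
  have hslope := hasDerivAt_iff_tendsto_slope.mp h0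
  have hneg : ∀ᶠ t in 𝓝[≠] (0:ℝ), slope (fun t : ℝ => ψ (a + t • v)) 0 t < 0 :=
    hslope.eventually_lt_const hQ
  rw [eventually_nhdsWithin_iff] at hneg
  obtain ⟨d, hd, hdprop⟩ := Metric.eventually_nhds_iff.mp hneg
  set c : ℝ := min d r' / 2 with hc
  have hcpos : 0 < c := by positivity
  have hcd : c < d := by
    calc c < min d r' := by simpa [hc] using half_lt_self (lt_min hd hr'pos)
    _ ≤ d := min_le_left _ _
  have hcr' : c < r' := by
    calc c < min d r' := by simpa [hc] using half_lt_self (lt_min hd hr'pos)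
    _ ≤ r' := min_le_right _ _
  -- ψ (a + t • v) < 0 for t ∈ (0, c]
  have hψneg : ∀ t : ℝ, 0 < t → t ≤ c → ψ (a + t • v) < 0 := by
    intro t ht htc
    have habs : dist t (0:ℝ) < d := by
      rw [Real.dist_eq, sub_zero, abs_of_pos ht]; exact lt_of_le_of_lt htc hcd
    have := hdprop habs (by simp [ne_of_gt ht])
    rw [slope_def_field] at this
    have h2 : (ψ (a + t • v) - ψ (a + (0:ℝ) • v)) / (t - 0) < 0 := by
      simpa [div_eq_iff] using this
    have h3 : ψ (a + (0:ℝ) • v) = 0 := by simpa using hψa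
    rw [h3, sub_zero, sub_zero, div_neg_iff] at h2
    rcases h2 with ⟨h4, h5⟩ | ⟨h4, h5⟩
    · linarith
    · exact h4
  -- g is strictly decreasing on [0, c]
  set g : ℝ → ℝ := fun t => f (a + t • v) with hg
  have hanti : StrictAntiOn g (Set.Icc 0 c) := by
    apply strictAntiOn_of_deriv_neg (convex_Icc 0 c)
    · apply ContinuousOn.mono (s := Set.Ioo (-r') r')
      · intro t ht
        exact (hgd t (by rw [abs_lt]; exact ⟨ht.1, ht.2⟩)).continuousAt.continuousWithinAt
      · intro t ht
        rw [Set.mem_Icc] at ht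
        constructor <;> [linarith; linarith [ht.2]]
    · intro t ht
      rw [interior_Icc, Set.mem_Ioo] at ht
      have habs : |t| < r' := by rw [abs_lt]; constructor <;> [linarith [ht.1]; linarith [ht.2]]
      rw [(hgd t habs).deriv]
      exact hψneg t ht.1 (le_of_lt ht.2)
  have hlt : g c < g 0 := hanti (Set.mem_Icc.mpr ⟨le_rfl, le_of_lt hcpos⟩)
    (Set.mem_Icc.mpr ⟨le_of_lt hcpos, le_rfl⟩) hcpos
  have hg0 : g 0 = f a := by simp [hg]
  have : f a ≤ g c := hmin (hmem c (by rw [abs_of_pos hcpos]; exact hcr'))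
  rw [hg0] at hlt
  simp only [hg] at this hlt
  linarith [this, hlt]

lemma fderiv_homog {f : E → ℝ} (hhom : ∀ c : ℝ, 0 < c → ∀ x, f (c • x) = c * f x)
    {c : ℝ} (hc : 0 < c) {x : E} (hd : DifferentiableAt ℝ f x)
    (hdc : DifferentiableAt ℝ f (c • x)) :
    fderiv ℝ f (c • x) = fderiv ℝ f x := by
  have hsm : HasFDerivAt (fun y : E => c • y) (c • ContinuousLinearMap.id ℝ E) x := by
    have := (ContinuousLinearMap.id ℝ E).hasFDerivAt (x := x)
    exact this.const_smul c
  have h1 : HasFDerivAt (fun y : E => f (c • y))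
      ((fderiv ℝ f (c • x)).comp (c • ContinuousLinearMap.id ℝ E)) x :=
    hdc.hasFDerivAt.comp x hsm
  have h2 : HasFDerivAt (fun y : E => f (c • y)) (c • fderiv ℝ f x) x := by
    have : (fun y : E => f (c • y)) = fun y : E => c • f y := by
      funext y; rw [hhom c hc y]; rfl
    rw [this]
    exact hd.hasFDerivAt.const_smul c
  have := h1.unique h2
  ext w
  have hw := congrFun (congrArg (fun L : E →L[ℝ] ℝ => (L : E → ℝ)) this) w
  simp only [ContinuousLinearMap.coe_comp', Function.comp_apply,
    ContinuousLinearMap.coe_smul', Pi.smul_apply, ContinuousLinearMap.coe_id', id_eq,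
    smul_eq_mul, map_smul] at hw
  have hcne : c ≠ 0 := ne_of_gt hc
  field_simp at hw
  linarith

lemma hbil_radial_zero {f : E → ℝ} (hhom : ∀ c : ℝ, 0 < c → ∀ x, f (c • x) = c * f x)
    {z : E} (hz : z ≠ 0) (hf : ∀ x : E, x ≠ 0 → ContDiffAt ℝ 2 f x) (w : E) :
    hbil f z z w = 0 := by
  set ψ : E → ℝ := fun x => fderiv ℝ f x w with hψ
  have hdψ : DifferentiableAt ℝ ψ z :=
    (((hf z hz).fderiv_right (m := 1) (by norm_num)).differentiableAt one_ne_zero).clm_apply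
      (differentiableAt_const w)
  have hcurve : HasDerivAt (fun s : ℝ => (1 + s) • z) z 0 := by
    have : HasDerivAt (fun s : ℝ => (1 + s)) 1 0 := by
      simpa using (hasDerivAt_id (0:ℝ)).const_add 1
    simpa using this.smul_const z
  have hcomp : HasDerivAt (fun s : ℝ => ψ ((1 + s) • z)) (fderiv ℝ ψ z z) 0 := by
    have h1 : HasDerivAt (fun s : ℝ => ψ ((1 + s) • z)) (fderiv ℝ ψ ((1 + (0:ℝ)) • z) z) 0 := by
      have hz' : ((1:ℝ) + 0) • z = z := by simp
      have houter : HasFDerivAt ψ (fderiv ℝ ψ (((1:ℝ) + 0) • z)) (((1:ℝ) + 0) • z) := by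
        rw [hz']; exact hdψ.hasFDerivAt
      exact houter.comp_hasDerivAt (0:ℝ) (by simpa using hcurve)
    simpa using h1
  have hconst : (fun s : ℝ => ψ ((1 + s) • z)) =ᶠ[𝓝 (0:ℝ)] fun _ => ψ z := by
    have hIoo : Set.Ioo (-(1:ℝ)) 1 ∈ 𝓝 (0:ℝ) := by
      apply Ioo_mem_nhds <;> norm_num
    filter_upwards [hIoo] with s hs
    rcases hs with ⟨h1, h2⟩
    have hpos : (0:ℝ) < 1 + s := by linarith
    have hne : (1 + s) • z ≠ 0 := smul_ne_zero (ne_of_gt hpos) hz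
    have := fderiv_homog hhom hpos ((hf z hz).differentiableAt (by norm_num))
      ((hf _ hne).differentiableAt (by norm_num))
    simp only [hψ, this]
  have hzero : HasDerivAt (fun s : ℝ => ψ ((1 + s) • z)) 0 0 := by
    have : HasDerivAt (fun _ : ℝ => ψ z) 0 0 := hasDerivAt_const 0 (ψ z)
    exact this.congr_of_eventuallyEq hconst
  have := hcomp.unique hzero
  rw [hbil]
  exact this

end CalcAux


section ObstacleMatrix

open Matrix

lemma obstacle_matrix (n : ℕ) (z : ES n) (hz : ‖z‖ = 1) (e : Fin n → ES n)
    (he : Orthonormal ℝ e) (hez : ∀ i, ⟪e i, z⟫ = 0) (d : Fin n → ℝ) (hd : ∀ i, 0 < d i)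
    (g : ES n → ℝ) (hg : ∀ i (v : ES n), hbil g z (e i) v = d i * ⟪e i, v⟫)
    (hrad : ∀ w, hbil g z z w = 0) :
    (Matrix.of fun i j : Fin (n + 1) =>
      hbil g z (EuclideanSpace.single i 1) (EuclideanSpace.single j 1) +
        ⟪z, EuclideanSpace.single i 1⟫ * ⟪z, EuclideanSpace.single j 1⟫).PosDef ∧
    (Matrix.of fun i j : Fin (n + 1) =>
      hbil g z (EuclideanSpace.single i 1) (EuclideanSpace.single j 1) +
        ⟪z, EuclideanSpace.single i 1⟫ * ⟪z, EuclideanSpace.single j 1⟫).det = ∏ i, d i := by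
  classical
  set s : Fin (n + 1) → ES n := fun i => EuclideanSpace.single i 1 with hs
  set w : Fin (n + 1) → ES n := Fin.snoc e z with hw
  have hwcast : ∀ i : Fin n, w i.castSucc = e i := fun i => by simp [hw]
  have hwlast : w (Fin.last n) = z := by simp [hw]
  have hzz : ⟪z, z⟫ = 1 := by
    rw [real_inner_self_eq_norm_sq, hz]; norm_num
  have hortho : Orthonormal ℝ w := by
    rw [orthonormal_iff_ite]
    intro i j
    induction i using Fin.lastCases with
    | last =>
      induction j using Fin.lastCases with
      | last => simp [hwlast, hzz, hz]
      | cast j =>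
        have : ⟪z, e j⟫ = 0 := by rw [real_inner_comm]; exact hez j
        simp [hwlast, hwcast, this, (Fin.castSucc_lt_last j).ne']
    | cast i =>
      induction j using Fin.lastCases with
      | last => simp [hwlast, hwcast, hez i, (Fin.castSucc_lt_last i).ne]
      | cast j =>
        have := (orthonormal_iff_ite.mp he) i j
        simp only [hwcast, this]
        by_cases hij : i = j <;> simp [hij, Fin.castSucc_inj]
  set dd : Fin (n + 1) → ℝ := Fin.snoc d 1 with hdd
  have hB : ∀ k (x : ES n), hbil g z (w k) x + ⟪z, w k⟫ * ⟪z, x⟫ = dd k * ⟪w k, x⟫ := by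
    intro k x
    induction k using Fin.lastCases with
    | last => simp [hwlast, hrad, hzz, hz, hdd, Fin.snoc_last]
    | cast k =>
      have : ⟪z, e k⟫ = 0 := by rw [real_inner_comm]; exact hez k
      simp [hwcast, hg, this, hdd, Fin.snoc_castSucc]
  -- w is an orthonormal basis
  have hcard : Fintype.card (Fin (n + 1)) = Module.finrank ℝ (ES n) := by
    simp [finrank_euclideanSpace]
  have hspan : ⊤ ≤ Submodule.span ℝ (Set.range w) := by
    rw [hortho.linearIndependent.span_eq_top_of_card_eq_finrank hcard]
  set ob : OrthonormalBasis (Fin (n + 1)) ℝ (ES n) := OrthonormalBasis.mk hortho hspan with hob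
  have hobw : ∀ k, ob k = w k := fun k => by rw [hob, OrthonormalBasis.coe_mk]
  have hrepr : ∀ x : ES n, ∑ k, ⟪w k, x⟫ • w k = x := by
    intro x
    have := ob.sum_repr' x
    simpa [hobw] using this
  have hpars : ∀ x y : ES n, ∑ k, ⟪w k, x⟫ * ⟪w k, y⟫ = ⟪x, y⟫ := by
    intro x y
    have := ob.sum_inner_mul_inner x y
    calc ∑ k, ⟪w k, x⟫ * ⟪w k, y⟫ = ∑ k, ⟪x, ob k⟫ * ⟪ob k, y⟫ := by
          refine Finset.sum_congr rfl fun k _ => ?_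
          rw [hobw, real_inner_comm]
    _ = ⟪x, y⟫ := this
  set Q : Matrix (Fin (n + 1)) (Fin (n + 1)) ℝ := Matrix.of fun k i => ⟪w k, s i⟫ with hQ
  set A : Matrix (Fin (n + 1)) (Fin (n + 1)) ℝ := Matrix.of fun i j =>
      hbil g z (s i) (s j) + ⟪z, s i⟫ * ⟪z, s j⟫ with hA
  have hQtQ : Qᵀ * Q = 1 := by
    ext i j
    rw [Matrix.mul_apply]
    simp only [hQ, Matrix.transpose_apply, Matrix.of_apply]
    rw [hpars (s i) (s j)]
    by_cases hij : i = j
    · subst hij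
      simp [hs, EuclideanSpace.inner_single_left, EuclideanSpace.single_apply]
    · simp [hs, EuclideanSpace.inner_single_left, EuclideanSpace.single_apply, hij,
        Matrix.one_apply, Ne.symm hij]
  have hAQ : A = Qᵀ * Matrix.diagonal dd * Q := by
    ext i j
    rw [Matrix.mul_apply]
    have hexp : A i j = ∑ k, ⟪w k, s i⟫ * (dd k * ⟪w k, s j⟫) := by
      have h1 : hbil g z (s i) (s j) = ∑ k, ⟪w k, s i⟫ * hbil g z (w k) (s j) := by
        conv_lhs => rw [← hrepr (s i)]
        rw [hbil_sum_left]
      have h2 : ⟪z, s i⟫ = ∑ k, ⟪w k, s i⟫ * ⟪z, w k⟫ := by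
        conv_lhs => rw [← hrepr (s i)]
        rw [inner_sum]
        refine Finset.sum_congr rfl fun k _ => ?_
        rw [real_inner_smul_right]
      have : A i j = ∑ k, ⟪w k, s i⟫ * (hbil g z (w k) (s j) + ⟪z, w k⟫ * ⟪z, s j⟫) := by
        rw [hA]
        simp only [Matrix.of_apply]
        rw [h1, h2, Finset.sum_mul, ← Finset.sum_add_distrib]
        refine Finset.sum_congr rfl fun k _ => ?_
        ring
      rw [this]
      refine Finset.sum_congr rfl fun k _ => ?_
      rw [hB k (s j)]
    rw [hexp]
    refine Finset.sum_congr rfl fun k _ => ?_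
    rw [Matrix.mul_apply]
    rw [Finset.sum_eq_single k]
    · simp only [Matrix.transpose_apply, hQ, Matrix.of_apply, Matrix.diagonal_apply_eq]
      ring
    · intro b _ hb
      have : Matrix.diagonal dd b k = 0 := Matrix.diagonal_apply_ne _ hb
      rw [Matrix.transpose_apply, this]
      ring
    · intro hk; exact absurd (Finset.mem_univ k) hk
  have hddpos : ∀ k, 0 < dd k := by
    intro k
    induction k using Fin.lastCases with
    | last => simp [hdd]
    | cast k => simpa [hdd] using hd k
  have hAT : Aᵀ = A := by
    rw [hAQ, Matrix.transpose_mul, Matrix.transpose_mul, Matrix.transpose_transpose,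
      Matrix.diagonal_transpose, Matrix.mul_assoc]
  constructor
  · refine Matrix.PosDef.of_dotProduct_mulVec_pos ?_ ?_
    · -- IsHermitian
      ext i j
      rw [Matrix.conjTranspose_apply, star_trivial]
      have h := congrFun (congrFun hAT j) i
      rw [Matrix.transpose_apply] at h
      exact h.symm
    · -- positivity of the quadratic form
      intro x hx
      have hQx : Q *ᵥ x ≠ 0 := by
        intro h0
        apply hx
        have h1 : Qᵀ *ᵥ (Q *ᵥ x) = (Qᵀ * Q) *ᵥ x := Matrix.mulVec_mulVec _ _ _
        rw [h0, hQtQ, Matrix.mulVec_zero] at h1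
        have := h1.symm
        rwa [Matrix.one_mulVec] at this
      have hform : star x ⬝ᵥ (A *ᵥ x) = ∑ k, dd k * (Q *ᵥ x) k ^ 2 := by
        rw [hAQ]
        rw [star_trivial]
        rw [← Matrix.mulVec_mulVec, ← Matrix.mulVec_mulVec]
        rw [dotProduct_mulVec, Matrix.vecMul_transpose]
        rw [dotProduct, Finset.sum_congr rfl]
        intro k _
        rw [Matrix.mulVec_diagonal]
        ring
      rw [hform]
      obtain ⟨k0, hk0⟩ := Function.ne_iff.mp hQx
      apply Finset.sum_pos' (fun k _ => mul_nonneg (hddpos k).le (sq_nonneg _))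
      refine ⟨k0, Finset.mem_univ _, ?_⟩
      have : (0:ℝ) < (Q *ᵥ x) k0 ^ 2 := pow_two_pos_of_ne_zero hk0
      exact mul_pos (hddpos k0) this
  · rw [hAQ, Matrix.det_mul, Matrix.det_mul, Matrix.det_transpose]
    have hQQ : Q.det * Q.det = 1 := by
      have := congrArg Matrix.det hQtQ
      rwa [Matrix.det_mul, Matrix.det_transpose, Matrix.det_one] at this
    have : Q.det * Matrix.det (Matrix.diagonal dd) * Q.det
        = Matrix.det (Matrix.diagonal dd) := by
      linear_combination Matrix.det (Matrix.diagonal dd) * hQQ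
    rw [this, Matrix.det_diagonal]
    rw [hdd, Fin.prod_snoc]
    simp

end ObstacleMatrix

theorem statement_5 (n : ℕ) (hn : 0 < n) (α : ℝ) (hα : 0 < α)
    (T : ℝ) (hT : 0 < T) (Φ : ShrinkingObstacle n)
    (δ C₀ : ℝ) (hδ : 0 < δ) (hC₀ : PenaltyConst n α Φ C₀) (P : Penalty δ C₀)
    (u : ES n → ℝ → ℝ) (hu : IsPenalizedSol n α T δ C₀ Φ P u)
    -- the initial data strictly encloses the obstacle, and `δ < min_{𝕊ⁿ}(u₀ − φ₀)`
    (hencl : ∀ z ∈ Sph n, Φ.φ z 0 < u z 0)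
    (hδ' : ∀ z ∈ Sph n, δ < u z 0 - Φ.φ z 0) :
    ∀ z ∈ Sph n, ∀ t ∈ Set.Ico (0 : ℝ) T,
      Φ.φ z t < u z t ∧
        -C₀ ≤ P.β (u z t - Φ.φ z t) ∧ P.β (u z t - Φ.φ z t) ≤ 0 := by
  classical
  -- basic facts
  have hSphNe : (Sph n).Nonempty := by
    refine ⟨EuclideanSpace.single 0 1, ?_⟩
    simp [Sph, EuclideanSpace.norm_single]
  have hSphne0 : ∀ z ∈ Sph n, z ≠ (0 : ES n) := by
    intro z hz
    intro h0
    rw [Sph, mem_sphere_zero_iff_norm] at hz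
    rw [h0] at hz; simp at hz
  -- the main claim : u > φ on the whole of 𝕊ⁿ × [0,T)
  suffices hmain : ∀ z ∈ Sph n, ∀ t ∈ Set.Ico (0 : ℝ) T, Φ.φ z t < u z t by
    intro z hz t ht
    refine ⟨hmain z hz t ht, ?_, ?_⟩
    · have h0 : (0:ℝ) ≤ u z t - Φ.φ z t := by linarith [hmain z hz t ht]
      calc -C₀ = P.β 0 := (P.at_zero).symm
      _ ≤ P.β (u z t - Φ.φ z t) := P.mono h0
    · rcases le_or_gt δ (u z t - Φ.φ z t) with h | h
      · rw [P.zero_of_ge _ h]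
      · calc P.β (u z t - Φ.φ z t) ≤ P.β δ := P.mono h.le
        _ = 0 := P.zero_of_ge δ le_rfl
  by_contra hcon
  push_neg at hcon
  obtain ⟨z₁, hz₁, t₁, ht₁, hle₁⟩ := hcon
  -- the contact set in time
  set S : Set ℝ := {t | t ∈ Set.Ico (0:ℝ) T ∧ ∃ z ∈ Sph n, u z t ≤ Φ.φ z t} with hSdef
  have hSne : S.Nonempty := ⟨t₁, ht₁, z₁, hz₁, hle₁⟩
  have hSbdd : BddBelow S := ⟨0, fun t ht => ht.1.1⟩
  set t₀ : ℝ := sInf S with ht₀def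
  have ht₀0 : 0 ≤ t₀ := le_csInf hSne fun t ht => ht.1.1
  have ht₀T : t₀ < T := lt_of_le_of_lt (csInf_le hSbdd ⟨ht₁, z₁, hz₁, hle₁⟩) ht₁.2
  -- joint continuity
  have hucont : ContinuousOn (fun p : ES n × ℝ => u p.1 p.2) (({(0:ES n)}ᶜ) ×ˢ Set.Ico 0 T) :=
    hu.smooth.continuousOn
  have hφcont : ContinuousOn (fun p : ES n × ℝ => Φ.φ p.1 p.2) (({(0:ES n)}ᶜ) ×ˢ Set.Ici 0) :=
    Φ.smooth.continuousOn
  -- t₀ belongs to S, witnessed by a contact point z₀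
  have hcontact : ∃ z₀ ∈ Sph n, u z₀ t₀ ≤ Φ.φ z₀ t₀ := by
    obtain ⟨ts, hts_anti, hts_tendsto, hts_mem⟩ := exists_seq_tendsto_sInf hSne hSbdd
    have hzs : ∀ k : ℕ, ∃ z ∈ Sph n, u z (ts k) ≤ Φ.φ z (ts k) := fun k => (hts_mem k).2
    choose zs hzs1 hzs2 using hzs
    have hzsph : ∀ k, zs k ∈ Metric.sphere (0 : ES n) 1 := fun k => hzs1 k
    obtain ⟨z₀, hz₀mem, σ, hσmono, hσtend⟩ :=
      (isCompact_sphere (0 : ES n) 1).tendsto_subseq hzsph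
    have hz₀sph : z₀ ∈ Sph n := hz₀mem
    have hz₀ne : z₀ ≠ 0 := hSphne0 z₀ hz₀sph
    have htst : Filter.Tendsto (fun k => ts (σ k)) Filter.atTop (𝓝 t₀) :=
      hts_tendsto.comp hσmono.tendsto_atTop
    have hpair : Filter.Tendsto (fun k => ((zs (σ k), ts (σ k)) : ES n × ℝ))
        Filter.atTop (𝓝 (z₀, t₀)) := hσtend.prodMk_nhds htst
    have hinset : ∀ k, ((zs (σ k), ts (σ k)) : ES n × ℝ) ∈ (({(0:ES n)}ᶜ) ×ˢ Set.Ico 0 T) :=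
      fun k => ⟨hSphne0 _ (hzs1 _), (hts_mem (σ k)).1⟩
    have hinset' : ∀ k, ((zs (σ k), ts (σ k)) : ES n × ℝ) ∈ (({(0:ES n)}ᶜ) ×ˢ Set.Ici 0) :=
      fun k => ⟨hSphne0 _ (hzs1 _), (hts_mem (σ k)).1.1⟩
    have hwithin : Filter.Tendsto (fun k => ((zs (σ k), ts (σ k)) : ES n × ℝ))
        Filter.atTop (𝓝[(({(0:ES n)}ᶜ) ×ˢ Set.Ico 0 T)] (z₀, t₀)) :=
      tendsto_nhdsWithin_of_tendsto_nhds_of_eventually_within _ hpair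
        (Filter.Eventually.of_forall hinset)
    have hwithin' : Filter.Tendsto (fun k => ((zs (σ k), ts (σ k)) : ES n × ℝ))
        Filter.atTop (𝓝[(({(0:ES n)}ᶜ) ×ˢ Set.Ici 0)] (z₀, t₀)) :=
      tendsto_nhdsWithin_of_tendsto_nhds_of_eventually_within _ hpair
        (Filter.Eventually.of_forall hinset')
    have htendu : Filter.Tendsto (fun k => u (zs (σ k)) (ts (σ k))) Filter.atTop
        (𝓝 (u z₀ t₀)) := (hucont (z₀, t₀) ⟨hz₀ne, ht₀0, ht₀T⟩).tendsto.comp hwithin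
    have htendφ : Filter.Tendsto (fun k => Φ.φ (zs (σ k)) (ts (σ k))) Filter.atTop
        (𝓝 (Φ.φ z₀ t₀)) := (hφcont (z₀, t₀) ⟨hz₀ne, ht₀0⟩).tendsto.comp hwithin'
    exact ⟨z₀, hz₀sph, le_of_tendsto_of_tendsto' htendu htendφ fun k => hzs2 (σ k)⟩
  obtain ⟨z₀, hz₀, hz₀le⟩ := hcontact
  have hz₀ne : z₀ ≠ 0 := hSphne0 z₀ hz₀
  have ht₀pos : 0 < t₀ := by
    rcases lt_or_eq_of_le ht₀0 with h | h
    · exact h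
    · exfalso
      rw [← h] at hz₀le
      exact absurd hz₀le (not_le.mpr (hencl z₀ hz₀))
  have ht₀Ioo : t₀ ∈ Set.Ioo (0:ℝ) T := ⟨ht₀pos, ht₀T⟩
  -- before t₀ there is no contact
  have hbelow : ∀ t, 0 ≤ t → t < t₀ → ∀ z ∈ Sph n, Φ.φ z t < u z t := by
    intro t ht0 htlt z hz
    by_contra hc
    push_neg at hc
    have : t ∈ S := ⟨⟨ht0, lt_trans htlt ht₀T⟩, z, hz, hc⟩
    exact absurd (csInf_le hSbdd this) (not_le.mpr htlt)
  -- at time t₀ the solution is everywhere above the obstacle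
  have hge : ∀ z ∈ Sph n, Φ.φ z t₀ ≤ u z t₀ := by
    intro z hz
    have hzne := hSphne0 z hz
    have hcz : Continuous (fun t : ℝ => ((z, t) : ES n × ℝ)) :=
      continuous_const.prodMk continuous_id
    have hcontu : ContinuousOn (fun t => u z t) (Set.Ico 0 T) := by
      refine (hucont.comp hcz.continuousOn ?_)
      intro t ht; exact ⟨hzne, ht⟩
    have hcontφ : ContinuousOn (fun t => Φ.φ z t) (Set.Ico 0 T) := by
      refine (hφcont.comp hcz.continuousOn ?_)
      intro t ht; exact ⟨hzne, ht.1⟩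
    have hcont : ContinuousOn (fun t => u z t - Φ.φ z t) (Set.Ico 0 T) := hcontu.sub hcontφ
    have hclos : t₀ ∈ closure (Set.Ico 0 t₀) := by
      rw [closure_Ico (ne_of_lt ht₀pos)]
      exact ⟨ht₀0, le_rfl⟩
    have hnebot : (𝓝[Set.Ico 0 t₀] t₀).NeBot := mem_closure_iff_nhdsWithin_neBot.mp hclos
    have htend : Filter.Tendsto (fun t => u z t - Φ.φ z t) (𝓝[Set.Ico 0 t₀] t₀)
        (𝓝 (u z t₀ - Φ.φ z t₀)) := by
      have h1 : ContinuousWithinAt (fun t => u z t - Φ.φ z t) (Set.Ico 0 T) t₀ :=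
        hcont t₀ ⟨ht₀0, ht₀T⟩
      exact (h1.mono (fun x hx => ⟨hx.1, lt_trans hx.2 ht₀T⟩)).tendsto
    have hev : ∀ᶠ t in 𝓝[Set.Ico 0 t₀] t₀, 0 ≤ u z t - Φ.φ z t := by
      filter_upwards [self_mem_nhdsWithin] with t ht
      have := hbelow t ht.1 ht.2 z hz
      linarith
    have := ge_of_tendsto htend hev
    linarith
  have heq : u z₀ t₀ = Φ.φ z₀ t₀ := le_antisymm hz₀le (hge z₀ hz₀)
  -- smoothness of the slices
  have hslice_u : ∀ x : ES n, x ≠ 0 → ContDiffAt ℝ 2 (fun y => u y t₀) x := by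
    intro x hx
    have hopen : IsOpen (({(0:ES n)}ᶜ) ×ˢ Set.Ioo (0:ℝ) T) :=
      isOpen_compl_singleton.prod isOpen_Ioo
    have hsub : (({(0:ES n)}ᶜ) ×ˢ Set.Ioo (0:ℝ) T) ⊆ (({(0:ES n)}ᶜ) ×ˢ Set.Ico (0:ℝ) T) :=
      Set.prod_mono subset_rfl Set.Ioo_subset_Ico_self
    have h1 : ContDiffAt ℝ (⊤ : ℕ∞) (fun p : ES n × ℝ => u p.1 p.2) (x, t₀) :=
      (hu.smooth.mono hsub).contDiffAt (hopen.mem_nhds ⟨hx, ht₀Ioo⟩)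
    have h2 : ContDiffAt ℝ (⊤ : ℕ∞) (fun y : ES n => ((y, t₀) : ES n × ℝ)) x :=
      (contDiff_id.prodMk contDiff_const).contDiffAt
    exact (h1.comp x h2).of_le (m := 2) (WithTop.coe_le_coe.mpr le_top)
  have hslice_φ : ∀ x : ES n, x ≠ 0 → ContDiffAt ℝ 2 (fun y => Φ.φ y t₀) x := by
    intro x hx
    have hopen : IsOpen (({(0:ES n)}ᶜ) ×ˢ Set.Ioi (0:ℝ)) :=
      isOpen_compl_singleton.prod isOpen_Ioi
    have hsub : (({(0:ES n)}ᶜ) ×ˢ Set.Ioi (0:ℝ)) ⊆ (({(0:ES n)}ᶜ) ×ˢ Set.Ici (0:ℝ)) :=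
      Set.prod_mono subset_rfl Set.Ioi_subset_Ici_self
    have h1 : ContDiffAt ℝ 3 (fun p : ES n × ℝ => Φ.φ p.1 p.2) (x, t₀) :=
      (Φ.smooth.mono hsub).contDiffAt (hopen.mem_nhds ⟨hx, ht₀pos⟩)
    have h2 : ContDiffAt ℝ 3 (fun y : ES n => ((y, t₀) : ES n × ℝ)) x :=
      (contDiff_id.prodMk contDiff_const).contDiffAt
    exact (h1.comp x h2).of_le (m := 2) (by norm_num)
  -- the difference has a global minimum at z₀
  set f : ES n → ℝ := fun x => u x t₀ - Φ.φ x t₀ with hfdef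
  have hf2 : ∀ x : ES n, x ≠ 0 → ContDiffAt ℝ 2 f x :=
    fun x hx => (hslice_u x hx).sub (hslice_φ x hx)
  have hminf : IsMinOn f ({(0:ES n)}ᶜ) z₀ := by
    rw [isMinOn_iff]
    intro x hx
    have hxne : x ≠ 0 := hx
    have hc : (0:ℝ) < ‖x‖ := norm_pos_iff.mpr hxne
    set xh : ES n := ‖x‖⁻¹ • x with hxh
    have hxhs : xh ∈ Sph n := by
      rw [Sph, mem_sphere_zero_iff_norm, hxh, norm_smul, norm_inv, norm_norm]
      field_simp
    have hxeq : ‖x‖ • xh = x := by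
      rw [hxh, smul_inv_smul₀ (ne_of_gt hc)]
    have hu' : u x t₀ = ‖x‖ * u xh t₀ := by
      rw [← hxeq, hu.homog t₀ ⟨ht₀0, ht₀T⟩ ‖x‖ hc xh, hxeq]
    have hφ' : Φ.φ x t₀ = ‖x‖ * Φ.φ xh t₀ := by
      rw [← hxeq, Φ.homog t₀ ht₀0 ‖x‖ hc xh, hxeq]
    have hfz₀ : f z₀ = 0 := by rw [hfdef]; simp [heq]
    rw [hfz₀, hfdef]
    simp only
    rw [hu', hφ', ← mul_sub]
    have := hge xh hxhs
    exact mul_nonneg (norm_nonneg x) (by linarith)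
  have hPv : ∀ v : ES n, 0 ≤ hbil f z₀ v v :=
    second_order_test isOpen_compl_singleton hz₀ne
      (fun x hx => hf2 x hx) hminf
  -- decomposition of the Hessian matrix
  set sv : Fin (n+1) → ES n := fun i => EuclideanSpace.single i 1 with hsv
  set Au : Matrix (Fin (n+1)) (Fin (n+1)) ℝ := Matrix.of fun i j =>
    hbil (fun x => u x t₀) z₀ (sv i) (sv j) + ⟪z₀, sv i⟫ * ⟪z₀, sv j⟫ with hAu
  set Aφ : Matrix (Fin (n+1)) (Fin (n+1)) ℝ := Matrix.of fun i j =>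
    hbil (fun x => Φ.φ x t₀) z₀ (sv i) (sv j) + ⟪z₀, sv i⟫ * ⟪z₀, sv j⟫ with hAφ
  set Pm : Matrix (Fin (n+1)) (Fin (n+1)) ℝ := Matrix.of fun i j =>
    hbil f z₀ (sv i) (sv j) with hPm
  have hsplit : Au = Aφ + Pm := by
    have hueq : (fun x => u x t₀) = fun x => f x + Φ.φ x t₀ := by
      funext x; rw [hfdef]; ring
    ext i j
    simp only [hAu, hAφ, hPm, Matrix.add_apply, Matrix.of_apply]
    rw [hueq, hbil_add (hf2 z₀ hz₀ne) (hslice_φ z₀ hz₀ne)]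
    ring
  -- the obstacle matrix
  obtain ⟨e, he, hez, heig⟩ := Φ.μ_eigen z₀ hz₀ t₀ ht₀0
  have hz₀norm : ‖z₀‖ = 1 := by
    rw [Sph, mem_sphere_zero_iff_norm] at hz₀; exact hz₀
  have hrad : ∀ w : ES n, hbil (fun x => Φ.φ x t₀) z₀ z₀ w = 0 :=
    hbil_radial_zero (fun c hc x => Φ.homog t₀ ht₀0 c hc x) hz₀ne
      (fun x hx => hslice_φ x hx)
  obtain ⟨hAφpos, hAφdet⟩ := obstacle_matrix n z₀ hz₀norm e he hez
    (fun i => (Φ.μ i z₀ t₀)⁻¹) (fun i => inv_pos.mpr (Φ.μ_pos i z₀ hz₀ t₀ ht₀0))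
    (fun x => Φ.φ x t₀) heig hrad
  -- Pm is positive semidefinite
  have hPmpsd : Pm.PosSemidef := by
    refine Matrix.PosSemidef.of_dotProduct_mulVec_nonneg ?_ ?_
    · ext i j
      rw [Matrix.conjTranspose_apply, star_trivial]
      simp only [hPm, Matrix.of_apply]
      exact hbil_symm (hf2 z₀ hz₀ne) (sv j) (sv i)
    · intro x
      have hb := hbil_bilin (hf2 z₀ hz₀ne) Finset.univ x x sv
      have hdot : dotProduct (star x) (Pm.mulVec x)
          = ∑ i, ∑ j, x i * x j * hbil f z₀ (sv i) (sv j) := by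
        simp only [dotProduct, Matrix.mulVec, Pi.star_apply, star_trivial,
          hPm, Matrix.of_apply]
        refine Finset.sum_congr rfl fun i _ => ?_
        rw [Finset.mul_sum]
        refine Finset.sum_congr rfl fun j _ => ?_
        ring
      show 0 ≤ dotProduct (star x) (Pm.mulVec x)
      rw [hdot, ← hb]
      exact hPv _
  -- determinant comparison
  have hμpos : (0:ℝ) < ∏ i, Φ.μ i z₀ t₀ :=
    Finset.prod_pos fun i _ => Φ.μ_pos i z₀ hz₀ t₀ ht₀0
  have hdet : (∏ i, Φ.μ i z₀ t₀)⁻¹ ≤ Au.det := by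
    rw [hsplit]
    calc (∏ i, Φ.μ i z₀ t₀)⁻¹ = ∏ i, (Φ.μ i z₀ t₀)⁻¹ := by
          rw [← Finset.prod_inv_distrib]
    _ = Aφ.det := hAφdet.symm
    _ ≤ (Aφ + Pm).det := PosDef.det_le_det_add hAφpos hPmpsd
  set Du : ℝ := suppHessDet n (fun x => u x t₀) z₀ with hDu
  have hDuAu : Du = Au.det := rfl
  have hDupos : 0 < Du := by
    rw [hDuAu]; exact lt_of_lt_of_le (inv_pos.mpr hμpos) hdet
  -- curvature bound at the contact point
  have hKle : Du ^ (-α) ≤ (∏ i, Φ.μ i z₀ t₀) ^ α := by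
    have h1 : Du⁻¹ ≤ ∏ i, Φ.μ i z₀ t₀ := by
      rw [← inv_inv (∏ i, Φ.μ i z₀ t₀)]
      exact inv_anti₀ (inv_pos.mpr hμpos) (hDuAu ▸ hdet)
    calc Du ^ (-α) = (Du⁻¹) ^ α := by
          rw [Real.rpow_neg hDupos.le, ← Real.inv_rpow hDupos.le]
    _ ≤ (∏ i, Φ.μ i z₀ t₀) ^ α := Real.rpow_le_rpow (inv_nonneg.mpr hDupos.le) h1 hα.le
  have hC₀ge : (∏ i, Φ.μ i z₀ t₀) ^ α ≤ C₀ := by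
    obtain ⟨M, hM⟩ := Φ.μ_bdd
    rw [hC₀]
    apply le_csSup
    · refine ⟨(M ^ n) ^ α, ?_⟩
      rintro y ⟨z, hz, t, ht, rfl⟩
      have hμpos' : ∀ i, 0 < Φ.μ i z t := fun i => Φ.μ_pos i z hz t ht
      have hprod : ∏ i, Φ.μ i z t ≤ M ^ n := by
        calc ∏ i, Φ.μ i z t ≤ ∏ _i : Fin n, M :=
              Finset.prod_le_prod (fun i _ => (hμpos' i).le) (fun i _ => hM i z hz t ht)
        _ = M ^ n := by simp
      exact Real.rpow_le_rpow (Finset.prod_nonneg fun i _ => (hμpos' i).le) hprod hα.le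
    · exact ⟨z₀, hz₀, t₀, ht₀0, rfl⟩
  -- the evolution equation at the contact point gives a contradiction
  have hder_u := hu.eqn z₀ hz₀ t₀ ht₀Ioo
  have hbeta : P.β (u z₀ t₀ - Φ.φ z₀ t₀) = -C₀ := by
    rw [heq, sub_self, P.at_zero]
  have hder_φ := Φ.hφt z₀ hz₀ t₀ ht₀0
  have hder : HasDerivAt (fun t => u z₀ t - Φ.φ z₀ t)
      (-(Du ^ (-α)) + C₀ - Φ.φt z₀ t₀) t₀ := by
    have := (hder_u.sub hder_φ)
    rw [hbeta] at this
    rw [← hDu] at this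
    refine this.congr_deriv ?_
    ring
  have hDpos : 0 < -(Du ^ (-α)) + C₀ - Φ.φt z₀ t₀ := by
    have h1 : Φ.φt z₀ t₀ < 0 := Φ.φt_neg z₀ hz₀ t₀ ht₀0
    have h2 : Du ^ (-α) ≤ C₀ := le_trans hKle hC₀ge
    linarith
  -- but the difference decreases to 0 from positive values: contradiction
  -- extract a time slightly before t₀ where the difference is negative
  have hslope := hasDerivAt_iff_tendsto_slope.mp hder
  have hpos_ev : ∀ᶠ x in 𝓝[≠] t₀, 0 < slope (fun t => u z₀ t - Φ.φ z₀ t) t₀ x :=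
    hslope.eventually_const_lt hDpos
  have hpos_ev' : ∀ᶠ x in 𝓝[<] t₀, 0 < slope (fun t => u z₀ t - Φ.φ z₀ t) t₀ x :=
    hpos_ev.filter_mono (nhdsWithin_mono t₀ fun x hx => ne_of_lt hx)
  have hIoo_ev : ∀ᶠ x in 𝓝[<] t₀, x ∈ Set.Ioo (0:ℝ) t₀ :=
    Ioo_mem_nhdsLT_of_mem ⟨ht₀pos, le_rfl⟩
  obtain ⟨x, hx1, hx2⟩ := (hpos_ev'.and hIoo_ev).exists
  obtain ⟨hx0, hxt₀⟩ := hx2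
  have hval : Φ.φ z₀ x < u z₀ x := hbelow x hx0.le hxt₀ z₀ hz₀
  rw [slope_def_field] at hx1
  have ht₀val : u z₀ t₀ - Φ.φ z₀ t₀ = 0 := by rw [heq]; ring
  rw [ht₀val, sub_zero] at hx1
  have hden : x - t₀ < 0 := by linarith
  have hnum : 0 < u z₀ x - Φ.φ z₀ x := by linarith
  have : (u z₀ x - Φ.φ z₀ x) / (x - t₀) < 0 := div_neg_of_pos_of_neg hnum hden
  linarith
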